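/- arXiv:1407.4296 — 2 statements merged into one kernel-verified Lean document; each statement's English description precedes it below -/
import Mathlib

section
/- For the quadratic polynomial P(x,y) = U + p_x (x-x_j) + p_y (y-y_j) + (1/2) p_xx ((x-x_j)^2 - h^2/12) + (1/2) p_yy ((y-y_j)^2 - h^2/12) + p_xy (x-x_j)(y-y_j) on the square cell Ω_j = [x_j - h/2, x_j + h/2] × [y_j - h/2, y_j + h/2], the smoothness indicator β = Σ_{1 ≤ |α| ≤ 2} ∫_{Ω_j} h^{2(|α|-1)} (∂^α P)^2 dΩ equals h^2 p_x^2 + h^2 p_y^2 + (13/12) h^4 p_xx^2 + (7/6) h^4 p_xy^2 + (13/12) h^4 p_yy^2. -/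
/-!
Every partial derivative of the quadratic `P` is affine in `(x - xj, y - yj)`, and over a square
centred at `(xj, yj)` the mixed terms of the square of such a function integrate to zero by
symmetry, so `∫∫ (a + b (x - xj) + c (y - yj))² = a² h² + (b² + c²) h⁴ / 12`. The second
derivatives are constants; collecting the five terms gives the indicator.
-/

/-- Partial derivative in the first variable. -/
noncomputable def pdx (f : ℝ → ℝ → ℝ) : ℝ → ℝ → ℝ := fun x y => deriv (fun t => f t y) x
/-- Partial derivative in the second variable. -/
noncomputable def pdy (f : ℝ → ℝ → ℝ) : ℝ → ℝ → ℝ := fun x y => deriv (fun t => f x t) y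

section PartialDerivatives

variable (U px py pxx pxy pyy xc yc k : ℝ)

lemma pdx_quadratic :
    pdx (fun x y => U + px * (x - xc) + py * (y - yc)
      + (1 / 2) * pxx * ((x - xc) ^ 2 - k)
      + (1 / 2) * pyy * ((y - yc) ^ 2 - k)
      + pxy * (x - xc) * (y - yc)) = fun x y => px + pxx * (x - xc) + pxy * (y - yc) := by
  funext x y
  simp (disch := fun_prop) [pdx]
  ring

lemma pdy_quadratic :
    pdy (fun x y => U + px * (x - xc) + py * (y - yc)
      + (1 / 2) * pxx * ((x - xc) ^ 2 - k)
      + (1 / 2) * pyy * ((y - yc) ^ 2 - k)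
      + pxy * (x - xc) * (y - yc)) = fun x y => py + pxy * (x - xc) + pyy * (y - yc) := by
  funext x y
  simp (disch := fun_prop) [pdy]
  ring

lemma pdx_affine : pdx (fun x y => U + px * (x - xc) + py * (y - yc)) = fun _ _ => px := by
  funext x y
  simp [pdx]

lemma pdy_affine : pdy (fun x y => U + px * (x - xc) + py * (y - yc)) = fun _ _ => py := by
  funext x y
  simp [pdy]

end PartialDerivatives

lemma integral_sq_affine (a b c h : ℝ) :
    ∫ t in (c - h / 2)..(c + h / 2), (a + b * (t - c)) ^ 2 = a ^ 2 * h + b ^ 2 * h ^ 3 / 12 := by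
  have hF (t : ℝ) : HasDerivAt
      (fun t => a ^ 2 * (t - c) + a * b * (t - c) ^ 2 + b ^ 2 / 3 * (t - c) ^ 3)
      ((a + b * (t - c)) ^ 2) t := by
    have h1 : HasDerivAt (fun t : ℝ => t - c) 1 t := (hasDerivAt_id t).sub_const c
    refine (((h1.const_mul (a ^ 2)).add ((h1.pow 2).const_mul (a * b))).add
      ((h1.pow 3).const_mul (b ^ 2 / 3))).congr_deriv ?_
    ring
  rw [intervalIntegral.integral_eq_sub_of_hasDerivAt (fun t _ => hF t)
    ((by fun_prop : Continuous fun t : ℝ => (a + b * (t - c)) ^ 2).intervalIntegrable _ _)]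
  ring

lemma integral_integral_sq_affine (a b c xc yc h : ℝ) :
    ∫ x in (xc - h / 2)..(xc + h / 2), ∫ y in (yc - h / 2)..(yc + h / 2),
        (a + b * (x - xc) + c * (y - yc)) ^ 2
      = a ^ 2 * h ^ 2 + (b ^ 2 + c ^ 2) * h ^ 4 / 12 := by
  simp_rw [integral_sq_affine]
  rw [intervalIntegral.integral_add
    ((by fun_prop : Continuous fun x : ℝ => (a + b * (x - xc)) ^ 2 * h).intervalIntegrable _ _)
    intervalIntegrable_const,
    intervalIntegral.integral_mul_const, integral_sq_affine, intervalIntegral.integral_const]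
  simp only [smul_eq_mul]
  ring

theorem smoothness_indicator_2d_general (xj yj h U px py pxx pxy pyy : ℝ)
    (P : ℝ → ℝ → ℝ)
    (hP : P = fun x y => U + px * (x - xj) + py * (y - yj)
      + (1 / 2) * pxx * ((x - xj) ^ 2 - h ^ 2 / 12)
      + (1 / 2) * pyy * ((y - yj) ^ 2 - h ^ 2 / 12)
      + pxy * (x - xj) * (y - yj)) :
    ((∫ x in (xj - h / 2)..(xj + h / 2), ∫ y in (yj - h / 2)..(yj + h / 2),
        h ^ (2 * (1 - 1)) * (pdx P x y) ^ 2)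
      + (∫ x in (xj - h / 2)..(xj + h / 2), ∫ y in (yj - h / 2)..(yj + h / 2),
        h ^ (2 * (1 - 1)) * (pdy P x y) ^ 2)
      + (∫ x in (xj - h / 2)..(xj + h / 2), ∫ y in (yj - h / 2)..(yj + h / 2),
        h ^ (2 * (2 - 1)) * (pdx (pdx P) x y) ^ 2)
      + (∫ x in (xj - h / 2)..(xj + h / 2), ∫ y in (yj - h / 2)..(yj + h / 2),
        h ^ (2 * (2 - 1)) * (pdy (pdx P) x y) ^ 2)
      + (∫ x in (xj - h / 2)..(xj + h / 2), ∫ y in (yj - h / 2)..(yj + h / 2),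
        h ^ (2 * (2 - 1)) * (pdy (pdy P) x y) ^ 2))
    = h ^ 2 * px ^ 2 + h ^ 2 * py ^ 2 + (13 / 12) * h ^ 4 * pxx ^ 2
      + (7 / 6) * h ^ 4 * pxy ^ 2 + (13 / 12) * h ^ 4 * pyy ^ 2 := by
  subst hP
  rw [pdx_quadratic, pdy_quadratic, pdx_affine, pdy_affine, pdy_affine]
  simp only [Nat.sub_self, Nat.add_one_sub_one, mul_zero, mul_one, pow_zero, one_mul,
    integral_integral_sq_affine, intervalIntegral.integral_const, smul_eq_mul]
  ring

theorem smoothness_indicator_2d (xj yj h U px py pxx pxy pyy : ℝ) (hh : 0 < h)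
    (P : ℝ → ℝ → ℝ)
    (hP : P = fun x y => U + px * (x - xj) + py * (y - yj)
      + (1 / 2) * pxx * ((x - xj) ^ 2 - h ^ 2 / 12)
      + (1 / 2) * pyy * ((y - yj) ^ 2 - h ^ 2 / 12)
      + pxy * (x - xj) * (y - yj)) :
    ((∫ x in (xj - h / 2)..(xj + h / 2), ∫ y in (yj - h / 2)..(yj + h / 2),
        h ^ (2 * (1 - 1)) * (pdx P x y) ^ 2)
      + (∫ x in (xj - h / 2)..(xj + h / 2), ∫ y in (yj - h / 2)..(yj + h / 2),
        h ^ (2 * (1 - 1)) * (pdy P x y) ^ 2)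
      + (∫ x in (xj - h / 2)..(xj + h / 2), ∫ y in (yj - h / 2)..(yj + h / 2),
        h ^ (2 * (2 - 1)) * (pdx (pdx P) x y) ^ 2)
      + (∫ x in (xj - h / 2)..(xj + h / 2), ∫ y in (yj - h / 2)..(yj + h / 2),
        h ^ (2 * (2 - 1)) * (pdy (pdx P) x y) ^ 2)
      + (∫ x in (xj - h / 2)..(xj + h / 2), ∫ y in (yj - h / 2)..(yj + h / 2),
        h ^ (2 * (2 - 1)) * (pdy (pdy P) x y) ^ 2))
    = h ^ 2 * px ^ 2 + h ^ 2 * py ^ 2 + (13 / 12) * h ^ 4 * pxx ^ 2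
      + (7 / 6) * h ^ 4 * pxy ^ 2 + (13 / 12) * h ^ 4 * pyy ^ 2 :=
  smoothness_indicator_2d_general xj yj h U px py pxx pxy pyy P hP
end

section
/- Let u : ℝ → ℝ be three times continuously differentiable. Fix x_j ∈ ℝ, h > 0, and cells Ω_{j-1} = [x_j - 3h/2, x_j - h/2], Ω_j = [x_j - h/2, x_j + h/2], Ω_{j+1} = [x_j + h/2, x_j + 3h/2]. Let P_OPT be the unique polynomial of degree ≤ 2 whose cell averages over the three cells agree with those of u. Then there is a constant C depending only on sup_{[x_j-3h/2, x_j+3h/2]} |u'''| such that |P_OPT(x) − u(x)| ≤ C h^3 for all x ∈ Ω_j. -/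
/-!
Let `T` be the second-order Taylor polynomial of `u` at `xⱼ`. By Taylor's theorem `u - T` is
`O(M h³)` on the whole stencil, and `P - T` is a parabola whose three cell averages equal those
of `u - T`, so they are `O(M h³)` too. A parabola is controlled on the central cell by its three
cell averages (its coefficients are fixed linear combinations of them), hence `P - T`, and with
it `P - u = (P - T) - (u - T)`, is `O(M h³)` on the central cell.
-/

open Set intervalIntegral MeasureTheory Polynomial
open scoped Nat

theorem Polynomial.eval_eq_of_degree_le_two {R : Type*} [CommSemiring R] {P : R[X]}
    (hP : P.degree ≤ 2) (y : R) : P.eval y = P.coeff 0 + P.coeff 1 * y + P.coeff 2 * y ^ 2 := by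
  rw [eval_eq_sum_range' (n := 3) ((natDegree_le_iff_degree_le.2 hP).trans_lt (by norm_num))]
  simp [Finset.sum_range_succ]

theorem taylorWithinEval_uIcc_eq_univ {f : ℝ → ℝ} {n : ℕ} (hf : ContDiff ℝ n f) {x₀ x : ℝ}
    (hx : x₀ ≠ x) : taylorWithinEval f n (uIcc x₀ x) x₀ x = taylorWithinEval f n univ x₀ x := by
  simp only [taylor_within_apply, iteratedDerivWithin_univ]
  refine Finset.sum_congr rfl fun k hk => ?_
  rw [iteratedDerivWithin_eq_iteratedDeriv (uniqueDiffOn_uIcc hx)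
    (hf.contDiffAt.of_le (by exact_mod_cast Finset.mem_range_succ_iff.mp hk)) left_mem_uIcc]

theorem abs_sub_taylorWithinEval_le {f : ℝ → ℝ} {n : ℕ} (hf : ContDiff ℝ (n + 1) f)
    {x₀ x M : ℝ} (hM : ∀ y ∈ uIcc x₀ x, |iteratedDeriv (n + 1) f y| ≤ M) :
    |f x - taylorWithinEval f n univ x₀ x| ≤ M * |x - x₀| ^ (n + 1) / (n + 1)! := by
  rcases eq_or_ne x₀ x with rfl | hx
  · simp
  obtain ⟨y, hy, hrem⟩ := taylor_mean_remainder_lagrange_iteratedDeriv hx hf.contDiffOn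
  rw [← taylorWithinEval_uIcc_eq_univ hf.of_succ hx, hrem, abs_div, abs_mul, abs_pow,
    Nat.abs_cast]
  gcongr
  exact hM y (uIoo_subset_uIcc_self hy)

theorem abs_sub_taylorWithinEval_le_of_mem_Icc {f : ℝ → ℝ} {n : ℕ} (hf : ContDiff ℝ (n + 1) f)
    {c R ρ M y : ℝ} (hM : ∀ z ∈ Icc (c - R) (c + R), |iteratedDeriv (n + 1) f z| ≤ M)
    (hρ : ρ ≤ R) (hy : y ∈ Icc (c - ρ) (c + ρ)) :
    |f y - taylorWithinEval f n univ c y| ≤ M * ρ ^ (n + 1) / (n + 1)! := by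
  obtain ⟨hy₁, hy₂⟩ := hy
  have hM₀ : 0 ≤ M := (abs_nonneg _).trans (hM c ⟨by linarith, by linarith⟩)
  have hsub : uIcc c y ⊆ Icc (c - R) (c + R) :=
    uIcc_subset_Icc ⟨by linarith, by linarith⟩ ⟨by linarith, by linarith⟩
  calc |f y - taylorWithinEval f n univ c y| ≤ M * |y - c| ^ (n + 1) / (n + 1)! :=
        abs_sub_taylorWithinEval_le hf fun z hz => hM z (hsub hz)
    _ ≤ M * ρ ^ (n + 1) / (n + 1)! := by
        gcongr
        exact abs_sub_le_iff.2 ⟨by linarith, by linarith⟩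

theorem taylorWithinEval_univ_two (f : ℝ → ℝ) (x₀ x : ℝ) :
    taylorWithinEval f 2 univ x₀ x =
      f x₀ + deriv f x₀ * (x - x₀) + iteratedDeriv 2 f x₀ / 2 * (x - x₀) ^ 2 := by
  simp only [taylor_within_apply, Finset.sum_range_succ, Finset.sum_range_zero,
    iteratedDerivWithin_univ, iteratedDeriv_zero, iteratedDeriv_one, smul_eq_mul]
  norm_num [Nat.factorial]
  ring

theorem integral_quadratic (a b g c l r : ℝ) :
    ∫ y in l..r, (a + b * (y - c) + g * (y - c) ^ 2) =
      a * (r - l) + b * ((r - c) ^ 2 - (l - c) ^ 2) / 2 + g * ((r - c) ^ 3 - (l - c) ^ 3) / 3 := by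
  rw [integral_add (Continuous.intervalIntegrable (by fun_prop) _ _)
      (Continuous.intervalIntegrable (by fun_prop) _ _),
    integral_add (Continuous.intervalIntegrable (by fun_prop) _ _)
      (Continuous.intervalIntegrable (by fun_prop) _ _)]
  simp only [intervalIntegral.integral_const, smul_eq_mul, intervalIntegral.integral_const_mul,
    integral_comp_sub_right (fun y => y), integral_id, integral_comp_sub_right (fun y => y ^ 2),
    integral_pow]
  ring

theorem abs_integral_sub_le_of_integral_eq {f g T : ℝ → ℝ} {l r ε : ℝ} (hlr : l ≤ r)
    (hf : IntervalIntegrable f volume l r) (hg : IntervalIntegrable g volume l r)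
    (hT : IntervalIntegrable T volume l r) (heq : ∫ y in l..r, f y = ∫ y in l..r, g y)
    (hgT : ∀ y ∈ Icc l r, |g y - T y| ≤ ε) :
    |∫ y in l..r, (f y - T y)| ≤ ε * (r - l) := by
  have hbound : ∀ y ∈ uIoc l r, ‖g y - T y‖ ≤ ε := fun y hy =>
    hgT y (Ioc_subset_Icc_self (uIoc_of_le hlr ▸ hy))
  rw [integral_sub hf hT, heq, ← integral_sub hg hT, ← abs_of_nonneg (sub_nonneg.2 hlr)]
  exact norm_integral_le_of_norm_le_const hbound

/-- The hypotheses bound the averages of `y ↦ a + b y + g y²` over `[-3h/2, -h/2]`,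
`[-h/2, h/2]` and `[h/2, 3h/2]`. -/
theorem abs_quadratic_le_of_abs_cell_averages_le {a b g h t ε : ℝ} (hh : 0 < h)
    (ht : |t| ≤ h / 2) (hl : |a - b * h + 13 / 12 * g * h ^ 2| ≤ ε)
    (hc : |a + g * h ^ 2 / 12| ≤ ε) (hr : |a + b * h + 13 / 12 * g * h ^ 2| ≤ ε) :
    |a + b * t + g * t ^ 2| ≤ 13 / 6 * ε := by
  rw [abs_le] at hl hc hr
  have hg : |g| * h ^ 2 ≤ 2 * ε := by
    rw [← abs_of_pos (pow_pos hh 2), ← abs_mul, abs_le]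
    constructor <;> linarith
  have hb : |b| * h ≤ ε := by
    rw [← abs_of_pos hh, ← abs_mul, abs_le]
    constructor <;> linarith
  have ha : |a| ≤ 7 / 6 * ε := by
    rw [abs_le]
    constructor <;> linarith
  have hbt : |b| * |t| ≤ ε / 2 := by
    nlinarith [abs_nonneg b]
  have hgt : |g| * |t| ^ 2 ≤ ε / 2 := by
    have : |t| ^ 2 ≤ (h / 2) ^ 2 := pow_le_pow_left₀ (abs_nonneg t) ht 2
    nlinarith [abs_nonneg g]
  calc |a + b * t + g * t ^ 2| ≤ |a| + |b * t| + |g * t ^ 2| := abs_add_three _ _ _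
    _ = |a| + |b| * |t| + |g| * |t| ^ 2 := by rw [abs_mul, abs_mul, abs_pow]
    _ ≤ 13 / 6 * ε := by linarith

theorem abs_quadratic_le_of_abs_cell_integrals_le {a b g c h ε : ℝ} (hh : 0 < h)
    (hl : |∫ y in (c - 3 * h / 2)..(c - h / 2), (a + b * (y - c) + g * (y - c) ^ 2)| ≤ ε * h)
    (hc : |∫ y in (c - h / 2)..(c + h / 2), (a + b * (y - c) + g * (y - c) ^ 2)| ≤ ε * h)
    (hr : |∫ y in (c + h / 2)..(c + 3 * h / 2), (a + b * (y - c) + g * (y - c) ^ 2)| ≤ ε * h)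
    {y : ℝ} (hy : y ∈ Icc (c - h / 2) (c + h / 2)) :
    |a + b * (y - c) + g * (y - c) ^ 2| ≤ 13 / 6 * ε := by
  have average_le {A : ℝ} (hA : |h * A| ≤ ε * h) : |A| ≤ ε := by
    rw [abs_mul, abs_of_pos hh, mul_comm] at hA
    exact le_of_mul_le_mul_right hA hh
  rw [integral_quadratic] at hl hc hr
  refine abs_quadratic_le_of_abs_cell_averages_le hh
    (abs_sub_le_iff.2 ⟨by linarith [hy.2], by linarith [hy.1]⟩) (average_le ?_) (average_le ?_)
    (average_le ?_)
  · convert hl using 2; ring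
  · convert hc using 2; ring
  · convert hr using 2; ring

theorem cweno_optimal_parabola_third_order :
    ∃ C : ℝ, 0 < C ∧ ∀ (u : ℝ → ℝ) (xj h M : ℝ) (P : Polynomial ℝ),
      ContDiff ℝ 3 u → 0 < h →
      (∀ x ∈ Set.Icc (xj - 3 * h / 2) (xj + 3 * h / 2), |iteratedDeriv 3 u x| ≤ M) →
      P.degree ≤ 2 →
      (1 / h) * (∫ x in (xj - 3 * h / 2)..(xj - h / 2), P.eval x)
        = (1 / h) * ∫ x in (xj - 3 * h / 2)..(xj - h / 2), u x →
      (1 / h) * (∫ x in (xj - h / 2)..(xj + h / 2), P.eval x)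
        = (1 / h) * ∫ x in (xj - h / 2)..(xj + h / 2), u x →
      (1 / h) * (∫ x in (xj + h / 2)..(xj + 3 * h / 2), P.eval x)
        = (1 / h) * ∫ x in (xj + h / 2)..(xj + 3 * h / 2), u x →
      ∀ x ∈ Set.Icc (xj - h / 2) (xj + h / 2), |P.eval x - u x| ≤ C * M * h ^ 3 := by
  -- on the central cell `|P - T| ≤ 13/6 · 9/16 · M h³` and `|u - T| ≤ 1/48 · M h³`
  refine ⟨5 / 4, by norm_num, ?_⟩
  intro u xj h M P hu hh hM hP H₁ H₂ H₃ x hx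
  have hM₀ : 0 ≤ M := (abs_nonneg _).trans (hM xj ⟨by linarith, by linarith⟩)
  set T : ℝ → ℝ := fun y => taylorWithinEval u 2 univ xj y
  have hT : Continuous T := by
    simp only [T, taylorWithinEval_univ_two]
    fun_prop
  have htaylor {ρ y : ℝ} (hρ : ρ ≤ 3 * h / 2) (hy : y ∈ Icc (xj - ρ) (xj + ρ)) :
      |u y - T y| ≤ M * ρ ^ 3 / 6 :=
    (abs_sub_taylorWithinEval_le_of_mem_Icc hu hM hρ hy).trans_eq (by norm_num [Nat.factorial])
  have hPT (y : ℝ) : P.eval y - T y = (P.eval xj - u xj)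
      + (P.coeff 1 + 2 * P.coeff 2 * xj - deriv u xj) * (y - xj)
      + (P.coeff 2 - iteratedDeriv 2 u xj / 2) * (y - xj) ^ 2 := by
    simp only [T, eval_eq_of_degree_le_two hP, taylorWithinEval_univ_two]
    ring
  have hcell {l r : ℝ} (hl : xj - 3 * h / 2 ≤ l) (hr : r ≤ xj + 3 * h / 2) (hlr : r - l = h)
      (H : 1 / h * (∫ y in l..r, P.eval y) = 1 / h * ∫ y in l..r, u y) :
      |∫ y in l..r, (P.eval y - T y)| ≤ 9 / 16 * M * h ^ 3 * h :=
    (abs_integral_sub_le_of_integral_eq (ε := 9 / 16 * M * h ^ 3) (by linarith)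
      (P.continuous.intervalIntegrable _ _) (hu.continuous.intervalIntegrable _ _)
      (hT.intervalIntegrable _ _) (mul_left_cancel₀ (by positivity) H) fun y hy =>
        (htaylor le_rfl ⟨by linarith [hy.1], by linarith [hy.2]⟩).trans_eq (by ring)).trans_eq
      (by rw [hlr])
  simp only [hPT] at hcell
  have hPT_center := abs_quadratic_le_of_abs_cell_integrals_le hh
    (hcell (by linarith) (by linarith) (by ring) H₁)
    (hcell (by linarith) (by linarith) (by ring) H₂)
    (hcell (by linarith) (by linarith) (by ring) H₃) hx
  rw [← hPT] at hPT_center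
  have huT_center := htaylor (by linarith) hx
  calc |P.eval x - u x| = |(P.eval x - T x) - (u x - T x)| := by ring_nf
    _ ≤ |P.eval x - T x| + |u x - T x| := abs_sub _ _
    _ ≤ 5 / 4 * M * h ^ 3 := by nlinarith [pow_pos hh 3]
end
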